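/- Conversely, let R be an operator on H ⊗ H with R = R†, R ≥ 0 and tr_V(R) = 𝟙 on the second factor. Then the map E(ρ) = tr_{V'}((𝟙 ⊗ ρᵀ) R), where the transpose is taken in the computational basis and tr_{V'} is the partial trace over the second factor, is a completely positive trace-preserving map whose Choi–Jamiolkowski operator is R. -/

import Mathlib

open scoped Kronecker ComplexOrder

/-- Partial trace over the second tensor factor. -/
noncomputable def ptraceR {m k : Type*} [Fintype m] [Fintype k]
    (ρ : Matrix (m × k) (m × k) ℂ) : Matrix m m ℂ :=
  Matrix.of fun i j => ∑ x, ρ (i, x) (j, x)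

/-- Partial trace over the first tensor factor. -/
noncomputable def ptraceL {m k : Type*} [Fintype m] [Fintype k]
    (ρ : Matrix (m × k) (m × k) ℂ) : Matrix k k ℂ :=
  Matrix.of fun i j => ∑ x, ρ (x, i) (x, j)

/-- A map on matrices is linear. -/
def IsLinearMatMap {n m : Type*} (E : Matrix n n ℂ → Matrix m m ℂ) : Prop :=
  ∀ (a b : ℂ) (X Y : Matrix n n ℂ), E (a • X + b • Y) = a • E X + b • E Y

/-- The extension `id_k ⊗ E` of a map on matrices, acting blockwise. -/
noncomputable def mapExt {n : Type*} [Fintype n] (k : ℕ)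
    (E : Matrix n n ℂ → Matrix n n ℂ)
    (ρ : Matrix (Fin k × n) (Fin k × n) ℂ) : Matrix (Fin k × n) (Fin k × n) ℂ :=
  Matrix.of fun p q => E (Matrix.of fun a b => ρ (p.1, a) (q.1, b)) p.2 q.2

/-- Complete positivity: all the extensions `id_k ⊗ E` are positive maps. -/
def IsCompletelyPositive {n : Type*} [Fintype n]
    (E : Matrix n n ℂ → Matrix n n ℂ) : Prop :=
  ∀ (k : ℕ) (ρ : Matrix (Fin k × n) (Fin k × n) ℂ), ρ.PosSemidef → (mapExt k E ρ).PosSemidef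

/-- Trace preservation. -/
def IsTracePreserving {n : Type*} [Fintype n] (E : Matrix n n ℂ → Matrix n n ℂ) : Prop :=
  ∀ ρ : Matrix n n ℂ, (E ρ).trace = ρ.trace

/-- The unnormalized maximally entangled state |Φ⟩⟨Φ|, with |Φ⟩ = Σ_s |s⟩⊗|s⟩. -/
noncomputable def PhiM (n : Type*) [DecidableEq n] : Matrix (n × n) (n × n) ℂ :=
  Matrix.of fun p q => if p.1 = p.2 ∧ q.1 = q.2 then 1 else 0

/-- The map `E ⊗ id` acting on operators of `H ⊗ H` (E on the first factor). -/
noncomputable def chanTensorId {n : Type*} [Fintype n]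
    (E : Matrix n n ℂ → Matrix n n ℂ)
    (M : Matrix (n × n) (n × n) ℂ) : Matrix (n × n) (n × n) ℂ :=
  Matrix.of fun p q => E (Matrix.of fun a b => M (a, p.2) (b, q.2)) p.1 q.1

/-- The map `ρ ↦ tr_{V'}((𝟙 ⊗ ρᵀ) R)` built from a Choi–Jamiolkowski operator. -/
noncomputable def choiMap {n : Type*} [Fintype n]
    (R : Matrix (n × n) (n × n) ℂ) : Matrix n n ℂ → Matrix n n ℂ :=
  fun ρ => Matrix.of fun i j => ∑ k, ∑ q, ρ q k * R (i, q) (j, k)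

/-!
Writing `E = choiMap R`, the extension `id_k ⊗ E` sends `ρ` to the contraction of `ρ` and `R`
over their common second factor, which is a compression `Vᴴ (ρ ⊗ₖ R) V` of a Kronecker product
of positive matrices, hence positive. The trace of `E ρ` is `tr (ρ (tr_V R)ᵀ)`, and feeding in the
unnormalized maximally entangled state just reindexes `R`.
-/

open Matrix

section ContractSecond

variable {𝕜 ι κ μ : Type*} [RCLike 𝕜] [Fintype ι] [Fintype κ] [Fintype μ]

def Matrix.contractSecond (ρ : Matrix (ι × κ) (ι × κ) 𝕜) (R : Matrix (μ × κ) (μ × κ) 𝕜) :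
    Matrix (ι × μ) (ι × μ) 𝕜 :=
  of fun p q => ∑ w, ∑ t, ρ (p.1, t) (q.1, w) * R (p.2, t) (q.2, w)

theorem Matrix.PosSemidef.contractSecond {ρ : Matrix (ι × κ) (ι × κ) 𝕜}
    {R : Matrix (μ × κ) (μ × κ) 𝕜} (hρ : ρ.PosSemidef) (hR : R.PosSemidef) :
    (contractSecond ρ R).PosSemidef := by
  classical
  let V : Matrix ((ι × κ) × (μ × κ)) (ι × μ) 𝕜 :=
    of fun x p => if x.1.1 = p.1 ∧ x.2.1 = p.2 ∧ x.1.2 = x.2.2 then 1 else 0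
  have h : Matrix.contractSecond ρ R = Vᴴ * (ρ ⊗ₖ R) * V := by
    ext ⟨a, i⟩ ⟨b, j⟩
    simp [V, Matrix.contractSecond, mul_apply, kroneckerMap_apply, Fintype.sum_prod_type,
      ite_and, apply_ite (starRingEnd 𝕜), ite_mul]
  exact h ▸ (hρ.kronecker hR).conjTranspose_mul_mul_same V

end ContractSecond

section ChoiMap

variable {n : Type*} [Fintype n] (R : Matrix (n × n) (n × n) ℂ)

theorem isLinearMatMap_choiMap : IsLinearMatMap (choiMap R) := by
  intro a b X Y
  ext i j
  simp only [choiMap, of_apply, Matrix.add_apply, Matrix.smul_apply, smul_eq_mul, add_mul,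
    Finset.sum_add_distrib, Finset.mul_sum, mul_assoc]

theorem mapExt_choiMap (k : ℕ) (ρ : Matrix (Fin k × n) (Fin k × n) ℂ) :
    mapExt k (choiMap R) ρ = contractSecond ρ R :=
  rfl

theorem isCompletelyPositive_choiMap (hR : R.PosSemidef) :
    IsCompletelyPositive (choiMap R) := fun k ρ hρ =>
  mapExt_choiMap R k ρ ▸ hρ.contractSecond hR

theorem trace_choiMap (ρ : Matrix n n ℂ) :
    (choiMap R ρ).trace = (ρ * (ptraceL R)ᵀ).trace := by
  simp only [trace, diag, choiMap, ptraceL, mul_apply, transpose_apply, of_apply,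
    Finset.mul_sum]
  exact (Finset.sum_congr rfl fun _ _ => Finset.sum_comm).trans
    (Finset.sum_comm.trans (Finset.sum_congr rfl fun _ _ => Finset.sum_comm))

theorem isTracePreserving_choiMap [DecidableEq n] (hR : ptraceL R = 1) :
    IsTracePreserving (choiMap R) := by
  intro ρ
  rw [trace_choiMap, hR, transpose_one, mul_one]

theorem chanTensorId_choiMap_phiM [DecidableEq n] : chanTensorId (choiMap R) (PhiM n) = R := by
  ext ⟨i, q⟩ ⟨j, t⟩
  simp [chanTensorId, choiMap, PhiM, ite_and, Finset.sum_ite_eq']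

end ChoiMap

theorem stmt_4_general {n : Type*} [Fintype n] [DecidableEq n]
    (R : Matrix (n × n) (n × n) ℂ)
    (hpos : R.PosSemidef) (hptr : ptraceL R = 1) :
    IsLinearMatMap (choiMap R) ∧ IsCompletelyPositive (choiMap R) ∧
      IsTracePreserving (choiMap R) ∧ chanTensorId (choiMap R) (PhiM n) = R :=
  ⟨isLinearMatMap_choiMap R, isCompletelyPositive_choiMap R hpos,
    isTracePreserving_choiMap R hptr, chanTensorId_choiMap_phiM R⟩

/-- An operator `R` with `R = R†`, `R ≥ 0`, `tr_V R = 𝟙` defines a CPTP map whose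
Choi–Jamiolkowski operator is `R`. -/
theorem stmt_4 {n : Type*} [Fintype n] [DecidableEq n]
    (R : Matrix (n × n) (n × n) ℂ)
    (hH : R.IsHermitian) (hpos : R.PosSemidef) (hptr : ptraceL R = 1) :
    IsLinearMatMap (choiMap R) ∧ IsCompletelyPositive (choiMap R) ∧
      IsTracePreserving (choiMap R) ∧ chanTensorId (choiMap R) (PhiM n) = R :=
  stmt_4_general R hpos hptr
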